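/- The space of inner derivations of the algebra A₃⁴ (basis e₁,e₂,e₃ with e₁∘e₂ = ½e₃, e₂∘e₁ = -½e₃) is 2-dimensional over ℂ. -/

import Mathlib

/-! The map `w ↦ ad_w` is linear, so the inner derivations form its range. Since
`ad_w u = (w₀u₁ - w₁u₀) e₃`, its kernel is the line `ℂ e₃`, and rank–nullity gives `3 - 1 = 2`. -/

/-- The 3-dimensional Zinbiel algebra A₃⁴: e₁∘e₂ = ½e₃, e₂∘e₁ = -½e₃. -/
noncomputable def mulA34 : (Fin 3 → ℂ) → (Fin 3 → ℂ) → (Fin 3 → ℂ) :=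
  fun u v => ![0, 0, (u 0 * v 1 - u 1 * v 0) / 2]

theorem LinearMap.span_setOf_exists_forall_apply_eq {R M N P : Type*} [CommSemiring R]
    [AddCommMonoid M] [AddCommMonoid N] [AddCommMonoid P] [Module R M] [Module R N] [Module R P]
    (B : M →ₗ[R] N →ₗ[R] P) :
    Submodule.span R {f : N →ₗ[R] P | ∃ w, ∀ u, f u = B w u} = LinearMap.range B := by
  have hrange : {f : N →ₗ[R] P | ∃ w, ∀ u, f u = B w u} = LinearMap.range B := by
    ext f
    exact exists_congr fun w => ⟨fun h => (LinearMap.ext h).symm, fun h u => by rw [h]⟩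
  rw [hrange, Submodule.span_eq]

theorem mulA34_sub_mulA34 (w u : Fin 3 → ℂ) :
    mulA34 w u - mulA34 u w = ![0, 0, w 0 * u 1 - w 1 * u 0] := by
  ext i
  fin_cases i <;> simp [mulA34]
  ring

noncomputable def adA34 : (Fin 3 → ℂ) →ₗ[ℂ] Module.End ℂ (Fin 3 → ℂ) :=
  LinearMap.mk₂ ℂ (fun w u => mulA34 w u - mulA34 u w)
    (fun w₁ w₂ u => by simp only [mulA34_sub_mulA34]; ext i; fin_cases i <;> simp; ring)
    (fun c w u => by simp only [mulA34_sub_mulA34]; ext i; fin_cases i <;> simp; ring)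
    (fun w u₁ u₂ => by simp only [mulA34_sub_mulA34]; ext i; fin_cases i <;> simp; ring)
    (fun c w u => by simp only [mulA34_sub_mulA34]; ext i; fin_cases i <;> simp; ring)

theorem adA34_apply (w u : Fin 3 → ℂ) : adA34 w u = ![0, 0, w 0 * u 1 - w 1 * u 0] :=
  mulA34_sub_mulA34 w u

theorem ker_adA34 : LinearMap.ker adA34 = ℂ ∙ Pi.single 2 1 := by
  ext w
  rw [LinearMap.mem_ker, Submodule.mem_span_singleton]
  constructor
  · intro h
    have h0 : w 0 = 0 := by
      simpa [adA34_apply] using congrFun (LinearMap.congr_fun h (Pi.single 1 1)) 2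
    have h1 : w 1 = 0 := by
      simpa [adA34_apply] using congrFun (LinearMap.congr_fun h (Pi.single 0 1)) 2
    refine ⟨w 2, funext fun i => ?_⟩
    fin_cases i <;> simp [h0, h1]
  · rintro ⟨c, rfl⟩
    ext u i
    fin_cases i <;> simp [adA34_apply]

theorem finrank_range_adA34 : Module.finrank ℂ (LinearMap.range adA34) = 2 := by
  have rank_nullity := LinearMap.finrank_range_add_finrank_ker adA34
  rw [ker_adA34, finrank_span_singleton (by simp), Module.finrank_fin_fun] at rank_nullity
  omega

/-- The space of inner derivations of A₃⁴ is 2-dimensional. -/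
theorem inner_derivations_A34_dim_two :
    Module.finrank ℂ
      ↥(Submodule.span ℂ
        {f : (Fin 3 → ℂ) →ₗ[ℂ] (Fin 3 → ℂ) |
          ∃ w : Fin 3 → ℂ, ∀ u : Fin 3 → ℂ, f u = mulA34 w u - mulA34 u w}) = 2 := by
  rw [← finrank_range_adA34, ← LinearMap.span_setOf_exists_forall_apply_eq]
  rfl
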